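/- arXiv:2501.04199 — 5 statements merged into one kernel-verified Lean document; each statement's English description precedes it below -/
import Mathlib

section
/- For every natural number n, let h_n be the history of length n with initial location Off and all n actions equal to reset (the action sequence i·rⁿ). Then for every k ≤ n, every history of length n reachable from h_n by at most 2k steps of the relation R has last location Off, while there exists a history of length n reachable from h_n by at most 2n+1 steps of R whose last location is On. (In epistemic terms: E^{2k} Off holds at h_n for all k ≤ n, and E^{2n+1} Off fails at h_n.) -/
/-!
Human steps preserve the actions and AI steps preserve the locations. A reset at index `p` forces
the location at `p + 1` to be Off, and two consecutive Off locations force the action between them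
to be a reset, so each step of `GRel` moves the boundary of the Off/reset suffix of `hn n` back by
at most half an index: the final location, at index `n`, stays Off for `2n` steps. The bound is
sharp: `2n` steps reach `(bodd n, tⁿ)`, and flipping its initial location turns the clock On at
the end.
-/

/-- Transition function: reset (`false`) always yields Off (`false`),
    toggle (`true`) flips the location. -/
def step (l a : Bool) : Bool := if a then !l else false

/-- A history: an initial location together with a list of actions. -/
abbrev Hist := Bool × List Bool

/-- The sequence of locations visited along a history (length = #actions + 1). -/
def locSeq (h : Hist) : List Bool := List.scanl step h.1 h.2

/-- The last location of a history (the final entry of `locSeq`). -/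
def lastLoc (h : Hist) : Bool := List.foldl step h.1 h.2

/-- Appending an action to a history. -/
def ext (h : Hist) (a : Bool) : Hist := (h.1, h.2 ++ [a])

/-- Human indistinguishability: equal action lists. -/
def humanInd (h₁ h₂ : Hist) : Prop := h₁.2 = h₂.2

/-- AI indistinguishability: equal location sequences. -/
def aiInd (h₁ h₂ : Hist) : Prop := locSeq h₁ = locSeq h₂

/-- The union of the two indistinguishability relations. -/
def GRel (h₁ h₂ : Hist) : Prop := humanInd h₁ h₂ ∨ aiInd h₁ h₂

/-- The history `(Off, rⁿ)`: initial location Off, then `n` reset actions. -/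
def hn (n : ℕ) : Hist := (false, List.replicate n false)

/-- `reachLe k h g`: `g` is reachable from `h` by at most `k` steps of `GRel`. -/
def reachLe : ℕ → Hist → Hist → Prop
  | 0, h, g => h = g
  | k+1, h, g => reachLe k h g ∨ ∃ h', GRel h h' ∧ reachLe k h' g

lemma length_locSeq (h : Hist) : (locSeq h).length = h.2.length + 1 :=
  List.length_scanl

lemma getElem_locSeq_succ (h : Hist) {i : ℕ} (hi : i < h.2.length) :
    (locSeq h)[i + 1]'(by simp [length_locSeq, hi]) =
      step ((locSeq h)[i]'(by simp [length_locSeq]; omega)) h.2[i] :=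
  List.getElem_succ_scanl _

lemma lastLoc_eq_getElem_locSeq (h : Hist) :
    lastLoc h = (locSeq h)[h.2.length]'(by simp [length_locSeq]) := by
  simp [lastLoc, locSeq]

def ResetFrom (p : ℕ) (h : Hist) : Prop :=
  ∀ (i : ℕ) (hi : i < h.2.length), p ≤ i → h.2[i] = false

def OffFrom (q : ℕ) (h : Hist) : Prop :=
  ∀ (i : ℕ) (hi : i < (locSeq h).length), q ≤ i → (locSeq h)[i] = false

lemma ResetFrom.offFrom_succ {p : ℕ} {h : Hist} (hp : ResetFrom p h) : OffFrom (p + 1) h := by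
  rintro (_ | i) hi hpi
  · omega
  · rw [getElem_locSeq_succ h (by simp [length_locSeq] at hi; omega), hp i _ (by omega)]
    rfl

lemma OffFrom.resetFrom {q : ℕ} {h : Hist} (hq : OffFrom q h) : ResetFrom q h := by
  intro i hi hqi
  have hoff := hq (i + 1) (by simp [length_locSeq, hi]) (by omega)
  rw [getElem_locSeq_succ h hi, hq i (by simp [length_locSeq]; omega) hqi] at hoff
  simpa [step] using hoff

lemma OffFrom.lastLoc_eq_false {q : ℕ} {h : Hist} (hq : OffFrom q h) (hle : q ≤ h.2.length) :
    lastLoc h = false := by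
  rw [lastLoc_eq_getElem_locSeq]
  exact hq _ _ hle

lemma ResetFrom.of_humanInd {p : ℕ} {h h' : Hist} (hp : ResetFrom p h) (hh : humanInd h h') :
    ResetFrom p h' := by
  rwa [ResetFrom, ← show h.2 = h'.2 from hh]

lemma OffFrom.of_aiInd {q : ℕ} {h h' : Hist} (hq : OffFrom q h) (hh : aiInd h h') :
    OffFrom q h' := by
  rwa [OffFrom, ← show locSeq h = locSeq h' from hh]

-- After `m` steps of `GRel` from `hn n`, all actions from index `m / 2` on are resets and all
-- locations from index `(m + 1) / 2` on are Off.
def SuffixOff (m : ℕ) (h : Hist) : Prop :=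
  (∃ p, 2 * p ≤ m ∧ ResetFrom p h) ∧ ∃ q, 2 * q ≤ m + 1 ∧ OffFrom q h

lemma SuffixOff.mono {m m' : ℕ} {h : Hist} (hm : m ≤ m') (hs : SuffixOff m h) :
    SuffixOff m' h := by
  obtain ⟨⟨p, hpm, hp⟩, q, hqm, hq⟩ := hs
  exact ⟨⟨p, by omega, hp⟩, q, by omega, hq⟩

lemma SuffixOff.of_gRel {m : ℕ} {h h' : Hist} (hs : SuffixOff m h) (hr : GRel h h') :
    SuffixOff (m + 1) h' := by
  obtain ⟨⟨p, hpm, hp⟩, q, hqm, hq⟩ := hs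
  rcases hr with hh | ha
  · have hp' := hp.of_humanInd hh
    exact ⟨⟨p, by omega, hp'⟩, p + 1, by omega, hp'.offFrom_succ⟩
  · have hq' := hq.of_aiInd ha
    exact ⟨⟨q, by omega, hq'.resetFrom⟩, q, by omega, hq'⟩

lemma SuffixOff.of_reachLe {k m : ℕ} {h g : Hist} (hs : SuffixOff m h) (hr : reachLe k h g) :
    SuffixOff (m + k) g := by
  induction k generalizing h m with
  | zero => cases hr; exact hs
  | succ k ih =>
    rcases hr with hr | ⟨h', hh', hr⟩
    · exact (ih hs hr).mono (by omega)
    · exact (ih (hs.of_gRel hh') hr).mono (by omega)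

lemma SuffixOff.lastLoc_eq_false {m : ℕ} {h : Hist} (hs : SuffixOff m h)
    (hm : m ≤ 2 * h.2.length) : lastLoc h = false := by
  obtain ⟨-, q, hqm, hq⟩ := hs
  exact hq.lastLoc_eq_false (by omega)

lemma resetFrom_zero_hn (n : ℕ) : ResetFrom 0 (hn n) := by
  intro i hi _
  simp [hn]

lemma suffixOff_zero_hn (n : ℕ) : SuffixOff 0 (hn n) := by
  refine ⟨⟨0, le_rfl, resetFrom_zero_hn n⟩, 0, by omega, ?_⟩
  rintro (_ | i) hi _
  · simp [locSeq, hn]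
  · exact (resetFrom_zero_hn n).offFrom_succ (i + 1) hi (by omega)

lemma reachLe_tail {k : ℕ} {h g g' : Hist} (hr : reachLe k h g) (hg : GRel g g') :
    reachLe (k + 1) h g' := by
  induction k generalizing h with
  | zero => cases hr; exact Or.inr ⟨g', hg, rfl⟩
  | succ k ih =>
    rcases hr with hr | ⟨h', hh', hr⟩
    · exact Or.inl (ih hr)
    · exact Or.inr ⟨h', hh', ih hr⟩

lemma foldl_step_replicate_true (l : Bool) (j : ℕ) :
    List.foldl step l (List.replicate j true) = (l ^^ j.bodd) := by
  induction j generalizing l with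
  | zero => simp
  | succ j ih => simp [List.replicate_succ, ih, step]

lemma aiInd_of_step_eq {l a b : Bool} {as bs : List Bool}
    (hab : step (List.foldl step l as) a = step (List.foldl step l as) b) :
    aiInd (l, as ++ a :: bs) (l, as ++ b :: bs) := by
  simp [aiInd, locSeq, List.scanl_append, hab]

-- Alternately moving the initial location (Human cannot see it) and turning the next reset into a
-- toggle (AI cannot tell them apart when the clock is On) pushes the toggles through.
lemma reachLe_toggles (j m : ℕ) :
    reachLe (2 * j) (hn (j + m)) (j.bodd, List.replicate j true ++ List.replicate m false) := by
  induction j generalizing m with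
  | zero => simp [reachLe, hn]
  | succ j ih =>
    have hflip : GRel (j.bodd, List.replicate j true ++ List.replicate (m + 1) false)
        ((j + 1).bodd, List.replicate j true ++ false :: List.replicate m false) := Or.inl rfl
    have htoggle : GRel ((j + 1).bodd, List.replicate j true ++ false :: List.replicate m false)
        ((j + 1).bodd, List.replicate (j + 1) true ++ List.replicate m false) := by
      right
      rw [List.replicate_succ', List.append_assoc]
      apply aiInd_of_step_eq
      simp [foldl_step_replicate_true, step]
    rw [show j + 1 + m = j + (m + 1) by omega]
    exact reachLe_tail (reachLe_tail (ih (m + 1)) hflip) htoggle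

/-- at `hn n`, `E^{2k} Off` holds for all `k ≤ n`,
    while `E^{2n+1} Off` fails. -/
theorem stmt0 (n : ℕ) :
    (∀ k ≤ n, ∀ g : Hist, g.2.length = n → reachLe (2 * k) (hn n) g →
      lastLoc g = false) ∧
    (∃ g : Hist, g.2.length = n ∧ reachLe (2 * n + 1) (hn n) g ∧
      lastLoc g = true) := by
  refine ⟨fun k hk g hlen hr => ?_, ?_⟩
  · exact ((suffixOff_zero_hn n).of_reachLe hr).lastLoc_eq_false (by omega)
  · refine ⟨(!n.bodd, List.replicate n true), by simp, ?_, by simp [lastLoc, foldl_step_replicate_true]⟩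
    have hpath := reachLe_toggles n 0
    rw [List.replicate_zero, List.append_nil] at hpath
    exact reachLe_tail hpath (Or.inl rfl)
end

section
/- For every natural number n, common knowledge of Off is unattainable at the history h_n = (Off, rⁿ): there exists a history of length n reachable from h_n by finitely many steps of the relation R whose last location is On. Consequently C Off fails at h_n. -/
/-!
Any two histories of the same length are connected by a chain of `GRel` steps, by induction on
the length. A Human step changes the initial location freely, and appending the same action to
both sides of a step keeps it a step. The last action can also be changed: after a history ending
On, both toggle and reset lead to Off, so the two extensions have the same location sequence and
the AI cannot tell them apart. Since some history of every length ends On, it is reachable from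
`hn n`.
-/

lemma lastLoc_ext (h : Hist) (a : Bool) : lastLoc (ext h a) = step (lastLoc h) a := by
  simp [lastLoc, ext]

lemma locSeq_ext (h : Hist) (a : Bool) :
    locSeq (ext h a) = locSeq h ++ [step (lastLoc h) a] := by
  simp [locSeq, ext, lastLoc, List.scanl_append]

lemma lastLoc_eq_of_locSeq_eq {h g : Hist} (hg : locSeq h = locSeq g) :
    lastLoc h = lastLoc g := by
  simpa [locSeq, lastLoc, List.getLast?_scanl] using congrArg List.getLast? hg

lemma exists_eq_ext_of_length_eq_add_one {g : Hist} {n : ℕ} (hg : g.2.length = n + 1) :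
    ∃ h a, h.2.length = n ∧ g = ext h a := by
  obtain ⟨l, as⟩ := g
  rcases List.eq_nil_or_concat' as with rfl | ⟨bs, a, rfl⟩
  · simp at hg
  · exact ⟨(l, bs), a, by simpa using hg, rfl⟩

lemma lastLoc_hn (n : ℕ) : lastLoc (hn n) = false := by
  induction n with
  | zero => rfl
  | succ n ih =>
    have hn_succ : hn (n + 1) = ext (hn n) false := by simp [hn, ext, List.replicate_succ']
    rw [hn_succ, lastLoc_ext, ih]
    rfl

lemma exists_length_eq_lastLoc_eq_true (n : ℕ) :
    ∃ g : Hist, g.2.length = n ∧ lastLoc g = true := by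
  cases n with
  | zero => exact ⟨(true, []), rfl, rfl⟩
  | succ n =>
    refine ⟨ext (hn n) true, by simp [ext, hn], ?_⟩
    rw [lastLoc_ext, lastLoc_hn]
    rfl

lemma GRel_ext {h g : Hist} (a : Bool) (hg : GRel h g) : GRel (ext h a) (ext g a) := by
  rcases hg with hg | hg
  · exact Or.inl (congrArg (· ++ [a]) hg)
  · refine Or.inr ?_
    rw [aiInd, locSeq_ext, locSeq_ext, hg, lastLoc_eq_of_locSeq_eq hg]

lemma reflTransGen_GRel_ext {h g : Hist} (hg : Relation.ReflTransGen GRel h g) (a : Bool) :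
    Relation.ReflTransGen GRel (ext h a) (ext g a) :=
  Relation.ReflTransGen.lift (ext · a) (fun _ _ => GRel_ext a) _ _ hg

lemma GRel_ext_ext_of_lastLoc_eq_true {h : Hist} (hh : lastLoc h = true) (a b : Bool) :
    GRel (ext h a) (ext h b) := by
  refine Or.inr ?_
  rw [aiInd, locSeq_ext, locSeq_ext, hh]
  cases a <;> cases b <;> rfl

theorem reflTransGen_GRel_of_length_eq {g h : Hist} (hgh : g.2.length = h.2.length) :
    Relation.ReflTransGen GRel g h := by
  induction hg : g.2.length generalizing g h with
  | zero =>
    refine .single (Or.inl ?_)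
    rw [humanInd, List.length_eq_zero_iff.mp hg, List.length_eq_zero_iff.mp (hgh.symm.trans hg)]
  | succ n ih =>
    obtain ⟨g', a, hg', rfl⟩ := exists_eq_ext_of_length_eq_add_one hg
    obtain ⟨h', b, hh', rfl⟩ := exists_eq_ext_of_length_eq_add_one (hgh.symm.trans hg)
    obtain ⟨w, hw, hwOn⟩ := exists_length_eq_lastLoc_eq_true n
    exact (reflTransGen_GRel_ext (ih (hg'.trans hw.symm) hg') a).trans <|
      .head (GRel_ext_ext_of_lastLoc_eq_true hwOn a b)
        (reflTransGen_GRel_ext (ih (hw.trans hh'.symm) hw) b)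

/-- common knowledge of Off is unattainable at `hn n`:
    some history of length `n` in the reflexive-transitive closure of `GRel`
    from `hn n` has last location On; hence `C Off` fails at `hn n`. -/
theorem stmt1 (n : ℕ) :
    (∃ g : Hist, g.2.length = n ∧ Relation.ReflTransGen GRel (hn n) g ∧
      lastLoc g = true) ∧
    ¬ (∀ g : Hist, Relation.ReflTransGen GRel (hn n) g → lastLoc g = false) := by
  obtain ⟨g, hlen, hOn⟩ := exists_length_eq_lastLoc_eq_true n
  have hreach : Relation.ReflTransGen GRel (hn n) g :=
    reflTransGen_GRel_of_length_eq (by simp [hn, hlen])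
  exact ⟨⟨g, hlen, hreach, hOn⟩, fun hOff => by simp [hOff g hreach] at hOn⟩
end

section
/- Model update preserves within-action relations: for any two histories h, h' of the same length n, (i) h·r is Human-indistinguishable from h'·r iff h is Human-indistinguishable from h', and the same holds with r replaced by t; (ii) h·r is AI-indistinguishable from h'·r iff h is AI-indistinguishable from h', and h·t is AI-indistinguishable from h'·t iff h is AI-indistinguishable from h' and last h = last h'. -/
lemma humanInd_ext_iff (h h' : Hist) (a : Bool) :
    humanInd (ext h a) (ext h' a) ↔ humanInd h h' :=
  List.append_left_inj [a]

lemma aiInd_ext_iff (h h' : Hist) (a : Bool) :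
    aiInd (ext h a) (ext h' a) ↔ aiInd h h' ∧ step (lastLoc h) a = step (lastLoc h') a := by
  rw [aiInd, aiInd, locSeq_ext, locSeq_ext, List.append_singleton_inj]

lemma step_true_inj {l l' : Bool} : step l true = step l' true ↔ l = l' := by
  simp [step]

theorem stmt5_general (h h' : Hist) :
    (humanInd (ext h false) (ext h' false) ↔ humanInd h h') ∧
    (humanInd (ext h true) (ext h' true) ↔ humanInd h h') ∧
    (aiInd (ext h false) (ext h' false) ↔ aiInd h h') ∧
    (aiInd (ext h true) (ext h' true) ↔ aiInd h h' ∧ lastLoc h = lastLoc h') := by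
  refine ⟨humanInd_ext_iff h h' false, humanInd_ext_iff h h' true, ?_, ?_⟩
  · simp [aiInd_ext_iff, step]
  · rw [aiInd_ext_iff, step_true_inj]

/-- model update preserves within-action relations.
    (`false` = reset `r`, `true` = toggle `t`.) -/
theorem stmt5 (n : ℕ) (h h' : Hist) (hl : h.2.length = n) (hl' : h'.2.length = n) :
    (humanInd (ext h false) (ext h' false) ↔ humanInd h h') ∧
    (humanInd (ext h true) (ext h' true) ↔ humanInd h h') ∧
    (aiInd (ext h false) (ext h' false) ↔ aiInd h h') ∧
    (aiInd (ext h true) (ext h' true) ↔ aiInd h h' ∧ lastLoc h = lastLoc h') :=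
  stmt5_general h h'
end

section
/- The history h_n = (Off, rⁿ) is an endpoint of the indistinguishability structure: its AI-equivalence class is the singleton {h_n} (no other history of length n has the all-Off location sequence), and the only history of length n distinct from h_n and related to h_n by R is (On, rⁿ). Hence h_n has exactly one R-neighbor other than itself. -/
/-! From Off, a reset stays Off and a toggle moves to On, so a history whose locations are all
Off starts Off and consists of resets only: the AI class of `(Off, rⁿ)` is a singleton, and any
`R`-neighbour shares its action list `rⁿ`, leaving only the two choices of initial location. -/

lemma step_false_left (a : Bool) : step false a = a := by
  cases a <;> rfl

lemma locSeq_eq_replicate_false_iff (l : Bool) (as : List Bool) :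
    locSeq (l, as) = List.replicate (as.length + 1) false ↔ (l, as) = hn as.length := by
  induction as generalizing l with
  | nil => simp [locSeq, hn]
  | cons a as ih =>
    have ih' := ih (step l a)
    simp only [locSeq, hn, Prod.mk.injEq] at ih' ⊢
    rw [List.scanl_cons, List.length_cons, List.replicate_succ, List.replicate_succ,
      List.cons.injEq, List.cons.injEq]
    constructor
    · rintro ⟨rfl, hrest⟩
      rw [step_false_left] at ih' hrest
      exact ⟨rfl, (ih'.mp hrest).1, (ih'.mp hrest).2⟩
    · rintro ⟨rfl, rfl, hrest⟩
      exact ⟨rfl, ih'.mpr ⟨rfl, hrest⟩⟩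

lemma locSeq_hn (n : ℕ) : locSeq (hn n) = List.replicate (n + 1) false := by
  have h := (locSeq_eq_replicate_false_iff false (List.replicate n false)).mpr (by simp [hn])
  rwa [List.length_replicate] at h

lemma eq_hn_of_aiInd {g : Hist} {n : ℕ} (hlen : g.2.length = n) (hai : aiInd g (hn n)) :
    g = hn n := by
  obtain ⟨l, as⟩ := g
  subst hlen
  rw [aiInd, locSeq_hn] at hai
  exact (locSeq_eq_replicate_false_iff l as).mp hai

lemma eq_reset_of_GRel_hn {g : Hist} {n : ℕ} (hlen : g.2.length = n) (hrel : GRel (hn n) g) :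
    g.2 = List.replicate n false := by
  rcases hrel with hhum | hai
  · exact hhum.symm
  · rw [eq_hn_of_aiInd hlen hai.symm]
    rfl

/-- `hn n` is an endpoint: its AI-equivalence class is a singleton,
    and its only `GRel`-neighbor other than itself is `(On, rⁿ)`. -/
theorem stmt8 (n : ℕ) :
    (∀ g : Hist, g.2.length = n → aiInd g (hn n) → g = hn n) ∧
    (∀ g : Hist, g.2.length = n → g ≠ hn n → GRel (hn n) g →
      g = (true, List.replicate n false)) ∧
    GRel (hn n) (true, List.replicate n false) ∧
    (true, List.replicate n false) ≠ hn n := by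
  refine ⟨fun g => eq_hn_of_aiInd, ?_, Or.inl rfl, by simp [hn]⟩
  rintro ⟨l, as⟩ hlen hne hrel
  obtain rfl : as = List.replicate n false := eq_reset_of_GRel_hn hlen hrel
  cases l
  · exact absurd rfl hne
  · rfl
end

section
/- Knowledge asymmetry along the reset sequence: for every n ≥ 1, at the history h_n = (Off, rⁿ) both agents know Off holds — every history Human-indistinguishable from h_n has last location Off, and every history AI-indistinguishable from h_n has last location Off (so E Off holds at h_n) — yet E^{2n+1} Off fails at h_n, so the iterated mutual-knowledge hierarchy breaks at level 2n+1. -/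
/-!
Human indistinguishability keeps the action list `rⁿ`, whose final reset forces Off, and AI
indistinguishability keeps the whole location sequence, in particular its last entry; so Off is
known by both agents at `(Off, rⁿ)`. Higher up, the two relations can be alternated to trade the
resets for toggles one at a time: a Human step re-chooses the initial location so that the prefix
`tᵏ` ends On, and then the next reset and a toggle both lead to Off, so replacing one by the other
is an AI step. After `2n` steps one reaches `(b, tⁿ)`, and one more Human step chooses `b` so that
`tⁿ` ends On.
-/

lemma foldl_step_replicate_reset (l : Bool) {m : ℕ} (hm : m ≠ 0) :
    List.foldl step l (List.replicate m false) = false := by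
  obtain ⟨m, rfl⟩ := Nat.exists_eq_succ_of_ne_zero hm
  rw [List.replicate_succ', List.foldl_append]
  rfl

lemma exists_foldl_step_replicate_toggle_eq (k : ℕ) (c : Bool) :
    ∃ b, List.foldl step b (List.replicate k true) = c := by
  induction k generalizing c with
  | zero => exact ⟨c, rfl⟩
  | succ k ih =>
    obtain ⟨b, hb⟩ := ih c
    exact ⟨!b, by rwa [List.replicate_succ, List.foldl_cons, step, if_pos rfl, Bool.not_not]⟩

lemma lastLoc_eq_false_of_humanInd_hn {n : ℕ} (hn0 : n ≠ 0) {g : Hist}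
    (hg : humanInd g (hn n)) : lastLoc g = false := by
  rw [lastLoc, show g.2 = List.replicate n false from hg]
  exact foldl_step_replicate_reset g.1 hn0

lemma lastLoc_eq_of_aiInd {g g' : Hist} (hg : aiInd g g') : lastLoc g = lastLoc g' :=
  Option.some_injective _ <| by
    rw [lastLoc, lastLoc, ← List.getLast?_scanl, ← List.getLast?_scanl]
    exact congrArg List.getLast? hg

lemma aiInd_append_reset_toggle {b : Bool} {u : List Bool} (hu : List.foldl step b u = true)
    (w : List Bool) : aiInd (b, u ++ false :: w) (b, u ++ true :: w) := by
  simp only [aiInd, locSeq, List.scanl_append, hu, List.scanl_cons]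
  rfl

lemma reachLe_one_iff {h g : Hist} : reachLe 1 h g ↔ h = g ∨ GRel h g := by
  simp [reachLe]

lemma reachLe.succ_of_GRel {k : ℕ} {h g g' : Hist} (hr : reachLe k h g) (hs : GRel g g') :
    reachLe (k + 1) h g' := by
  induction k generalizing h with
  | zero => exact Or.inr ⟨g', hr ▸ hs, rfl⟩
  | succ k ih =>
    rcases hr with hr | ⟨h', hh', hr⟩
    · exact Or.inl (ih hr)
    · exact Or.inr ⟨h', hh', ih hr⟩

lemma reachLe_hn_toggles_resets {n k : ℕ} (hk : k ≤ n) (b : Bool) :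
    reachLe (2 * k + 1) (hn n)
      (b, List.replicate k true ++ List.replicate (n - k) false) := by
  induction k generalizing b with
  | zero => exact reachLe_one_iff.2 (Or.inr (Or.inl rfl))
  | succ k ih =>
    obtain ⟨b₀, hb₀⟩ := exists_foldl_step_replicate_toggle_eq k true
    have hreset : List.replicate (n - k) false = false :: List.replicate (n - (k + 1)) false := by
      rw [← List.replicate_succ]; congr 1; omega
    have hai : GRel (b₀, List.replicate k true ++ List.replicate (n - k) false)
        (b₀, List.replicate (k + 1) true ++ List.replicate (n - (k + 1)) false) := by
      rw [hreset, List.replicate_succ', List.append_assoc]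
      exact Or.inr (aiInd_append_reset_toggle hb₀ _)
    exact ((ih (by omega) b₀).succ_of_GRel hai).succ_of_GRel (Or.inl rfl)

/-- knowledge asymmetry along the reset sequence: at `hn n` (n ≥ 1)
    both agents know Off (so `E Off` holds), yet `E^{2n+1} Off` fails. -/
theorem stmt14 (n : ℕ) (hpos : 1 ≤ n) :
    (∀ g : Hist, humanInd g (hn n) → lastLoc g = false) ∧
    (∀ g : Hist, aiInd g (hn n) → lastLoc g = false) ∧
    (∀ g : Hist, reachLe 1 (hn n) g → lastLoc g = false) ∧
    ¬ (∀ g : Hist, reachLe (2 * n + 1) (hn n) g → lastLoc g = false) := by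
  have hn0 : n ≠ 0 := by omega
  have hhuman (g : Hist) (hg : humanInd g (hn n)) : lastLoc g = false :=
    lastLoc_eq_false_of_humanInd_hn hn0 hg
  have hai (g : Hist) (hg : aiInd g (hn n)) : lastLoc g = false :=
    (lastLoc_eq_of_aiInd hg).trans (hhuman _ rfl)
  refine ⟨hhuman, hai, fun g hg => ?_, fun hall => ?_⟩
  · rcases reachLe_one_iff.1 hg with rfl | hg | hg
    exacts [hhuman _ rfl, hhuman g hg.symm, hai g hg.symm]
  · obtain ⟨b, hb⟩ := exists_foldl_step_replicate_toggle_eq n true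
    have hon := hall _ (reachLe_hn_toggles_resets le_rfl b)
    simp only [lastLoc, Nat.sub_self, List.replicate_zero, List.append_nil, hb] at hon
    exact Bool.noConfusion hon
end
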